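/- Let s, N be positive integers, τ, h > 0, ω, κ, ν, β, q real constants, D₁ a real skew-symmetric N×N matrix, D₂ a real symmetric N×N matrix, and a ∈ ℝ^{s×s}, b ∈ ℝ^s Runge–Kutta coefficients satisfying b_i a_{ij} + b_j a_{ji} = b_i b_j for all i, j. Suppose (Bⁿ, ρⁿ, uⁿ, φⁿ) and (B^{n+1}, ρ^{n+1}, u^{n+1}, φ^{n+1}) are connected by one step of the full FPRK-s scheme (internal stages B_{ni}, ρ_{ni}, u_{ni}, φ_{ni} and slopes k_i¹, k_i², k_i³, k_i⁴ as in the scheme), and additionally φⁿ = |Bⁿ|² componentwise. Then the discrete Hamiltonian energy H_h = ω⟨D₂B, B⟩_h − κ⟨u − (ν/2)ρ + (q/2)|B|², |B|²⟩_h − (β/2)⟨ρ, ρ⟩_h − (1/2)⟨u, u⟩_h + ν⟨u, ρ⟩_h satisfies H_h^{n+1} = H_hⁿ, where H_hⁿ and H_h^{n+1} are evaluated at (Bⁿ, ρⁿ, uⁿ) and (B^{n+1}, ρ^{n+1}, u^{n+1}) respectively and |B|² denotes the vector with components |B_j|². -/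

import Mathlib

open Finset Matrix

/-- The discrete Hamiltonian energy
`H_h = ω⟨D₂B, B⟩_h − κ⟨u − (ν/2)ρ + (q/2)|B|², |B|²⟩_h − (β/2)⟨ρ,ρ⟩_h − (1/2)⟨u,u⟩_h + ν⟨u,ρ⟩_h`,
where `|B|²` is the vector with components `|B_j|²`. -/
noncomputable def discreteHamiltonian {N : ℕ} (h ω κ ν β q : ℝ)
    (D₂ : Matrix (Fin N) (Fin N) ℝ) (B : Fin N → ℂ) (ρ u : Fin N → ℝ) : ℝ :=
  ω * (h * ∑ j, (((D₂.map (Complex.ofReal)).mulVec B) j * (starRingEnd ℂ) (B j)).re)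
    - κ * (h * ∑ j, (u j - ν / 2 * ρ j + q / 2 * Complex.normSq (B j)) * Complex.normSq (B j))
    - β / 2 * (h * ∑ j, ρ j * ρ j)
    - 1 / 2 * (h * ∑ j, u j * u j)
    + ν * (h * ∑ j, u j * ρ j)

section Abstract

variable {V : Type*} [AddCommGroup V] [Module ℝ V]

private lemma rk_key {s : ℕ} (a : Fin s → Fin s → ℝ) (b : Fin s → ℝ)
    (hsymp : ∀ i j, b i * a i j + b j * a j i = b i * b j)
    (M : Fin s → Fin s → ℝ) (hM : ∀ i j, M i j = M j i) :
    ∑ i, ∑ j, b i * (b j * M i j) = 2 * ∑ i, ∑ j, b i * (a i j * M j i) := by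
  have h1 : ∑ i, ∑ j, b i * (b j * M i j)
      = ∑ i, ∑ j, ((b i * a i j) * M i j + (b j * a j i) * M i j) := by
    refine Finset.sum_congr rfl fun i _ => Finset.sum_congr rfl fun j _ => ?_
    rw [← add_mul, hsymp]; ring
  have h2 : ∑ i, ∑ j, (b j * a j i) * M i j = ∑ i, ∑ j, (b i * a i j) * M j i :=
    Finset.sum_comm
  have h3 : ∑ i, ∑ j, (b i * a i j) * M i j = ∑ i, ∑ j, b i * (a i j * M j i) :=
    Finset.sum_congr rfl fun i _ => Finset.sum_congr rfl fun j _ => by rw [hM i j]; ring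
  have h4 : ∑ i, ∑ j, (b i * a i j) * M j i = ∑ i, ∑ j, b i * (a i j * M j i) :=
    Finset.sum_congr rfl fun i _ => Finset.sum_congr rfl fun j _ => by ring
  calc ∑ i, ∑ j, b i * (b j * M i j)
      = ∑ i, ∑ j, ((b i * a i j) * M i j + (b j * a j i) * M i j) := h1
    _ = ∑ i, (∑ j, (b i * a i j) * M i j + ∑ j, (b j * a j i) * M i j) :=
        Finset.sum_congr rfl fun i _ => Finset.sum_add_distrib
    _ = ∑ i, ∑ j, (b i * a i j) * M i j + ∑ i, ∑ j, (b j * a j i) * M i j :=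
        Finset.sum_add_distrib
    _ = 2 * ∑ i, ∑ j, b i * (a i j * M j i) := by rw [h2, h3, h4]; ring

private lemma rk_conserve {s : ℕ}
    (S : V → V → ℝ) (L : V → ℝ)
    (hadd : ∀ x y z : V, S (x + y) z = S x z + S y z)
    (hsmul : ∀ (c : ℝ) (x y : V), S (c • x) y = c * S x y)
    (hsymm : ∀ x y : V, S x y = S y x)
    (hLadd : ∀ x y : V, L (x + y) = L x + L y)
    (hLsmul : ∀ (c : ℝ) (x : V), L (c • x) = c * L x)
    (a : Fin s → Fin s → ℝ) (b : Fin s → ℝ)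
    (hsymp : ∀ i j, b i * a i j + b j * a j i = b i * b j)
    (τ : ℝ) (y0 y1 : V) (Y k : Fin s → V)
    (hY : ∀ i, Y i = y0 + τ • ∑ m, a i m • k m)
    (hy1 : y1 = y0 + τ • ∑ i, b i • k i)
    (horth : ∀ i, L (k i) + 2 * S (Y i) (k i) = 0) :
    S y1 y1 + L y1 = S y0 y0 + L y0 := by
  classical
  have hadd' : ∀ x y z : V, S x (y + z) = S x y + S x z := fun x y z => by
    rw [hsymm, hadd, hsymm y x, hsymm z x]
  have hsmul' : ∀ (c : ℝ) (x y : V), S x (c • y) = c * S x y := fun c x y => by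
    rw [hsymm, hsmul, hsymm]
  have hS0 : ∀ y : V, S 0 y = 0 := fun y => by
    have := hsmul 0 0 y; simpa using this
  have hL0 : L 0 = 0 := by
    have := hLsmul 0 0; simpa using this
  have hsum : ∀ (t : Finset (Fin s)) (f : Fin s → V) (y : V),
      S (∑ i ∈ t, f i) y = ∑ i ∈ t, S (f i) y := by
    intro t f y
    induction t using Finset.induction_on with
    | empty => simpa using hS0 y
    | insert _ _ hnot ih => rw [Finset.sum_insert hnot, Finset.sum_insert hnot, hadd, ih]
  have hLsum : ∀ (t : Finset (Fin s)) (f : Fin s → V),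
      L (∑ i ∈ t, f i) = ∑ i ∈ t, L (f i) := by
    intro t f
    induction t using Finset.induction_on with
    | empty => simpa using hL0
    | insert _ _ hnot ih => rw [Finset.sum_insert hnot, Finset.sum_insert hnot, hLadd, ih]
  have hTk : ∀ (g : Fin s → ℝ) (y : V), S (∑ i, g i • k i) y = ∑ i, g i * S (k i) y :=
    fun g y => by
      rw [hsum]; exact Finset.sum_congr rfl fun i _ => hsmul _ _ _
  have hkT : ∀ (g : Fin s → ℝ) (y : V), S y (∑ i, g i • k i) = ∑ i, g i * S y (k i) :=
    fun g y => by
      rw [hsymm, hTk]; exact Finset.sum_congr rfl fun i _ => by rw [hsymm]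
  have hLT : ∀ (g : Fin s → ℝ), L (∑ i, g i • k i) = ∑ i, g i * L (k i) := fun g => by
    rw [hLsum]; exact Finset.sum_congr rfl fun i _ => hLsmul _ _
  -- expansion of S y1 y1
  have hS1 : S y1 y1 = S y0 y0 + 2 * τ * (∑ i, b i * S y0 (k i))
      + τ * τ * ∑ i, ∑ j, b i * (b j * S (k i) (k j)) := by
    rw [hy1, hadd, hadd', hadd']
    simp only [hsmul, hsmul', hTk, hkT]
    have e : ∑ i, b i * ∑ j, b j * S (k i) (k j) = ∑ i, ∑ j, b i * (b j * S (k i) (k j)) :=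
      Finset.sum_congr rfl fun i _ => Finset.mul_sum _ _ _
    have e2 : ∑ i, b i * S (k i) y0 = ∑ i, b i * S y0 (k i) :=
      Finset.sum_congr rfl fun i _ => by rw [hsymm]
    rw [e, e2]; ring
  have hL1 : L y1 = L y0 + τ * ∑ i, b i * L (k i) := by
    rw [hy1, hLadd, hLsmul, hLT]
  have hLk : ∀ i, L (k i) = -2 * (S y0 (k i) + τ * ∑ m, a i m * S (k m) (k i)) := by
    intro i
    have hYk : S (Y i) (k i) = S y0 (k i) + τ * ∑ m, a i m * S (k m) (k i) := by
      rw [hY i, hadd, hsmul, hTk]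
    have h := horth i
    rw [hYk] at h; linarith
  have hbL : ∑ i, b i * L (k i)
      = -2 * (∑ i, b i * S y0 (k i)) - 2 * τ * ∑ i, ∑ m, b i * (a i m * S (k m) (k i)) := by
    have e : ∀ i, b i * L (k i)
        = -2 * (b i * S y0 (k i)) - 2 * τ * (b i * ∑ m, a i m * S (k m) (k i)) :=
      fun i => by rw [hLk i]; ring
    rw [Finset.sum_congr rfl fun i _ => e i, Finset.sum_sub_distrib,
      ← Finset.mul_sum, ← Finset.mul_sum]
    have e3 : ∑ i, b i * ∑ m, a i m * S (k m) (k i)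
        = ∑ i, ∑ m, b i * (a i m * S (k m) (k i)) :=
      Finset.sum_congr rfl fun i _ => Finset.mul_sum _ _ _
    rw [e3]
  have hkey := rk_key a b hsymp (fun i j => S (k i) (k j)) (fun i j => hsymm _ _)
  rw [hS1, hL1, hbL, hkey]; ring

end Abstract

section Concrete

private lemma mulVec_re {N : ℕ} (D : Matrix (Fin N) (Fin N) ℝ) (B : Fin N → ℂ) (j : Fin N) :
    ((D.map Complex.ofReal).mulVec B j).re = ∑ m, D j m * (B m).re := by
  simp [Matrix.mulVec, dotProduct, Complex.re_sum, Matrix.map_apply, Complex.mul_re]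

private lemma mulVec_im {N : ℕ} (D : Matrix (Fin N) (Fin N) ℝ) (B : Fin N → ℂ) (j : Fin N) :
    ((D.map Complex.ofReal).mulVec B j).im = ∑ m, D j m * (B m).im := by
  simp [Matrix.mulVec, dotProduct, Complex.im_sum, Matrix.map_apply, Complex.mul_im]

private lemma skew_sum {N : ℕ} (D₁ : Matrix (Fin N) (Fin N) ℝ) (hD₁ : D₁ᵀ = -D₁)
    (v w : Fin N → ℝ) :
    ∑ j, (D₁.mulVec w j * v j + D₁.mulVec v j * w j) = 0 := by
  have hD : ∀ i j, D₁ j i = -D₁ i j := fun i j => by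
    have := congrFun (congrFun hD₁ i) j
    simpa [Matrix.transpose_apply, Matrix.neg_apply] using this
  have e1 : ∀ (x y : Fin N → ℝ) (j : Fin N),
      D₁.mulVec x j * y j = ∑ m, D₁ j m * x m * y j := by
    intro x y j
    simp [Matrix.mulVec, dotProduct, Finset.sum_mul]
  have e2 : ∑ j, ∑ m, D₁ j m * v m * w j = ∑ j, ∑ m, -(D₁ j m * w m * v j) := by
    rw [Finset.sum_comm]
    refine Finset.sum_congr rfl fun j _ => Finset.sum_congr rfl fun m _ => ?_
    rw [hD j m]; ring
  calc ∑ j, (D₁.mulVec w j * v j + D₁.mulVec v j * w j)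
      = ∑ j, (∑ m, D₁ j m * w m * v j + ∑ m, D₁ j m * v m * w j) :=
        Finset.sum_congr rfl fun j _ => by rw [e1 w v j, e1 v w j]
    _ = ∑ j, ∑ m, D₁ j m * w m * v j + ∑ j, ∑ m, D₁ j m * v m * w j := by
        rw [← Finset.sum_add_distrib]
    _ = 0 := by
        rw [e2, ← Finset.sum_add_distrib]
        refine Finset.sum_eq_zero fun j _ => ?_
        rw [← Finset.sum_add_distrib]
        exact Finset.sum_eq_zero fun m _ => by ring

private noncomputable def Sbig {N : ℕ} (ω κ ν β q : ℝ) (D₂ : Matrix (Fin N) (Fin N) ℝ)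
    (x y : (Fin N → ℂ) × (Fin N → ℝ) × (Fin N → ℝ) × (Fin N → ℝ)) : ℝ :=
  ∑ j, (ω * ∑ m, D₂ j m * ((x.1 m).re * (y.1 j).re + (x.1 m).im * (y.1 j).im)
    - κ / 2 * (x.2.2.1 j * y.2.2.2 j + y.2.2.1 j * x.2.2.2 j)
    + κ * ν / 4 * (x.2.1 j * y.2.2.2 j + y.2.1 j * x.2.2.2 j)
    - κ * q / 2 * (x.2.2.2 j * y.2.2.2 j)
    - β / 2 * (x.2.1 j * y.2.1 j)
    - 1 / 2 * (x.2.2.1 j * y.2.2.1 j)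
    + ν / 2 * (x.2.2.1 j * y.2.1 j + y.2.2.1 j * x.2.1 j))

variable {N : ℕ} (ω κ ν β q : ℝ) (D₂ : Matrix (Fin N) (Fin N) ℝ)

private lemma Sbig_add (x y z : (Fin N → ℂ) × (Fin N → ℝ) × (Fin N → ℝ) × (Fin N → ℝ)) :
    Sbig ω κ ν β q D₂ (x + y) z = Sbig ω κ ν β q D₂ x z + Sbig ω κ ν β q D₂ y z := by
  unfold Sbig
  rw [← Finset.sum_add_distrib]
  refine Finset.sum_congr rfl fun j _ => ?_
  simp only [Prod.fst_add, Prod.snd_add, Pi.add_apply, Complex.add_re, Complex.add_im]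
  have e : ∑ m, D₂ j m * (((x.1 m).re + (y.1 m).re) * (z.1 j).re
        + ((x.1 m).im + (y.1 m).im) * (z.1 j).im)
      = ∑ m, (D₂ j m * ((x.1 m).re * (z.1 j).re + (x.1 m).im * (z.1 j).im)
        + D₂ j m * ((y.1 m).re * (z.1 j).re + (y.1 m).im * (z.1 j).im)) :=
    Finset.sum_congr rfl fun m _ => by ring
  rw [e, Finset.sum_add_distrib]; ring

private lemma Sbig_smul (c : ℝ) (x y : (Fin N → ℂ) × (Fin N → ℝ) × (Fin N → ℝ) × (Fin N → ℝ)) :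
    Sbig ω κ ν β q D₂ (c • x) y = c * Sbig ω κ ν β q D₂ x y := by
  unfold Sbig
  rw [Finset.mul_sum]
  refine Finset.sum_congr rfl fun j _ => ?_
  simp only [Prod.smul_fst, Prod.smul_snd, Pi.smul_apply, Complex.smul_re, Complex.smul_im,
    smul_eq_mul]
  have e : ∑ m, D₂ j m * ((c * (x.1 m).re) * (y.1 j).re + (c * (x.1 m).im) * (y.1 j).im)
      = c * ∑ m, D₂ j m * ((x.1 m).re * (y.1 j).re + (x.1 m).im * (y.1 j).im) := by
    rw [Finset.mul_sum]; exact Finset.sum_congr rfl fun m _ => by ring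
  rw [e]; ring

private lemma Sbig_split (x y : (Fin N → ℂ) × (Fin N → ℝ) × (Fin N → ℝ) × (Fin N → ℝ)) :
    Sbig ω κ ν β q D₂ x y
      = ω * (∑ j, ∑ m, D₂ j m * ((x.1 m).re * (y.1 j).re + (x.1 m).im * (y.1 j).im))
        + ∑ j, (- (κ / 2) * (x.2.2.1 j * y.2.2.2 j + y.2.2.1 j * x.2.2.2 j)
          + κ * ν / 4 * (x.2.1 j * y.2.2.2 j + y.2.1 j * x.2.2.2 j)
          - κ * q / 2 * (x.2.2.2 j * y.2.2.2 j)
          - β / 2 * (x.2.1 j * y.2.1 j)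
          - 1 / 2 * (x.2.2.1 j * y.2.2.1 j)
          + ν / 2 * (x.2.2.1 j * y.2.1 j + y.2.2.1 j * x.2.1 j)) := by
  unfold Sbig
  rw [Finset.mul_sum, ← Finset.sum_add_distrib]
  exact Finset.sum_congr rfl fun j _ => by ring

private lemma Sbig_symm (hD₂ : D₂.IsSymm)
    (x y : (Fin N → ℂ) × (Fin N → ℝ) × (Fin N → ℝ) × (Fin N → ℝ)) :
    Sbig ω κ ν β q D₂ x y = Sbig ω κ ν β q D₂ y x := by
  rw [Sbig_split, Sbig_split]
  have hc : ∑ j, ∑ m, D₂ j m * ((x.1 m).re * (y.1 j).re + (x.1 m).im * (y.1 j).im)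
      = ∑ j, ∑ m, D₂ j m * ((y.1 m).re * (x.1 j).re + (y.1 m).im * (x.1 j).im) := by
    rw [Finset.sum_comm]
    refine Finset.sum_congr rfl fun j _ => Finset.sum_congr rfl fun m _ => ?_
    rw [hD₂.apply j m]; ring
  rw [hc]
  congr 1
  exact Finset.sum_congr rfl fun j _ => by ring

end Concrete

/-- One step of the full FPRK-s scheme with symplectic Runge–Kutta
coefficients, `D₁` real skew-symmetric and `D₂` real symmetric, starting from consistent
data `φⁿ = |Bⁿ|²`, conserves the discrete Hamiltonian energy: `H_h^{n+1} = H_hⁿ`. -/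
theorem FPRK_discrete_Hamiltonian_conservation
    (s N : ℕ) (hs : 0 < s) (hN : 0 < N)
    (τ h ω κ ν β q : ℝ) (hτ : 0 < τ) (hh : 0 < h)
    (D₁ D₂ : Matrix (Fin N) (Fin N) ℝ)
    (hD₁ : D₁ᵀ = -D₁) (hD₂ : D₂.IsSymm)
    (a : Fin s → Fin s → ℝ) (b : Fin s → ℝ)
    (hsymp : ∀ i j, b i * a i j + b j * a j i = b i * b j)
    (Bn B1 : Fin N → ℂ) (ρn un φn ρ1 u1 φ1 : Fin N → ℝ)
    (Bni : Fin s → Fin N → ℂ) (ρni uni φni : Fin s → Fin N → ℝ)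
    (k1 : Fin s → Fin N → ℂ) (k2 k3 k4 : Fin s → Fin N → ℝ)
    (hBni : ∀ i j, Bni i j = Bn j + (τ : ℂ) * ∑ m, ((a i m : ℝ) : ℂ) * k1 m j)
    (hρni : ∀ i j, ρni i j = ρn j + τ * ∑ m, a i m * k2 m j)
    (huni : ∀ i j, uni i j = un j + τ * ∑ m, a i m * k3 m j)
    (hφni : ∀ i j, φni i j = φn j + τ * ∑ m, a i m * k4 m j)
    (hk1 : ∀ i j, k1 i j = Complex.I *
      ((ω : ℂ) * ((D₂.map (Complex.ofReal)).mulVec (Bni i)) j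
        - (κ : ℂ) * ((uni i j - ν / 2 * ρni i j + q * φni i j : ℝ) : ℂ) * Bni i j))
    (hk2 : ∀ i, k2 i = D₁.mulVec (fun m => -uni i m + ν * ρni i m - κ * φni i m))
    (hk3 : ∀ i, k3 i = D₁.mulVec (fun m => -β * ρni i m + ν * uni i m + κ * ν / 2 * φni i m))
    (hk4 : ∀ i j, k4 i j = 2 * ((starRingEnd ℂ) (Bni i j) * k1 i j).re)
    (hB1 : ∀ j, B1 j = Bn j + (τ : ℂ) * ∑ i, ((b i : ℝ) : ℂ) * k1 i j)
    (hρ1 : ∀ j, ρ1 j = ρn j + τ * ∑ i, b i * k2 i j)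
    (hu1 : ∀ j, u1 j = un j + τ * ∑ i, b i * k3 i j)
    (hφ1 : ∀ j, φ1 j = φn j + τ * ∑ i, b i * k4 i j)
    (hconsistent : ∀ j, φn j = Complex.normSq (Bn j)) :
    discreteHamiltonian h ω κ ν β q D₂ B1 ρ1 u1
      = discreteHamiltonian h ω κ ν β q D₂ Bn ρn un := by
  classical
  -- Part A : consistency of φ with |B|² is propagated
  have hphi1 : ∀ j, φ1 j = Complex.normSq (B1 j) := by
    intro j
    have hYA : ∀ i, ((Bni i j, φni i j) : ℂ × ℝ)
        = (Bn j, φn j) + τ • ∑ m, a i m • ((k1 m j, k4 m j) : ℂ × ℝ) := by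
      intro i
      refine Prod.ext ?_ ?_
      · show Bni i j = Bn j + τ • (∑ m, a i m • ((k1 m j, k4 m j) : ℂ × ℝ)).1
        rw [hBni i j, Prod.fst_sum]
        simp [Complex.real_smul, Finset.mul_sum]
      · show φni i j = φn j + τ • (∑ m, a i m • ((k1 m j, k4 m j) : ℂ × ℝ)).2
        rw [hφni i j, Prod.snd_sum]
        simp [smul_eq_mul, Finset.mul_sum]
    have hy1A : ((B1 j, φ1 j) : ℂ × ℝ)
        = (Bn j, φn j) + τ • ∑ i, b i • ((k1 i j, k4 i j) : ℂ × ℝ) := by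
      refine Prod.ext ?_ ?_
      · show B1 j = Bn j + τ • (∑ i, b i • ((k1 i j, k4 i j) : ℂ × ℝ)).1
        rw [hB1 j, Prod.fst_sum]
        simp [Complex.real_smul, Finset.mul_sum]
      · show φ1 j = φn j + τ • (∑ i, b i • ((k1 i j, k4 i j) : ℂ × ℝ)).2
        rw [hφ1 j, Prod.snd_sum]
        simp [smul_eq_mul, Finset.mul_sum]
    have main := rk_conserve (V := ℂ × ℝ)
      (fun x y => -(x.1.re * y.1.re + x.1.im * y.1.im)) (fun x => x.2)
      (by intro x y z
          simp only [Prod.fst_add, Complex.add_re, Complex.add_im]; ring)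
      (by intro c x y
          simp only [Prod.smul_fst, Complex.smul_re, Complex.smul_im, smul_eq_mul]; ring)
      (by intro x y; ring)
      (by intro x y; simp [Prod.snd_add])
      (by intro c x; simp [Prod.smul_snd])
      a b hsymp τ (Bn j, φn j) (B1 j, φ1 j)
      (fun i => (Bni i j, φni i j)) (fun i => (k1 i j, k4 i j))
      hYA hy1A
      (by intro i
          show k4 i j + 2 * -((Bni i j).re * (k1 i j).re + (Bni i j).im * (k1 i j).im) = 0
          rw [hk4 i j]
          simp [Complex.mul_re, Complex.conj_re, Complex.conj_im]
          ring)
    simp only at main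
    have hn := hconsistent j
    rw [Complex.normSq_apply] at hn
    rw [Complex.normSq_apply]
    linarith [main]
  -- Part B : conservation of the quadratic energy
  have hYB : ∀ i, ((Bni i, ρni i, uni i, φni i) :
        (Fin N → ℂ) × (Fin N → ℝ) × (Fin N → ℝ) × (Fin N → ℝ))
      = (Bn, ρn, un, φn) + τ • ∑ m, a i m • ((k1 m, k2 m, k3 m, k4 m) :
        (Fin N → ℂ) × (Fin N → ℝ) × (Fin N → ℝ) × (Fin N → ℝ)) := by
    intro i
    refine Prod.ext ?_ (Prod.ext ?_ (Prod.ext ?_ ?_))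
    · simp only [Prod.fst_add, Prod.smul_fst, Prod.fst_sum, Prod.smul_snd, Prod.snd_sum]
      funext j
      rw [Pi.add_apply, Pi.smul_apply, Finset.sum_apply, hBni i j]
      simp [Complex.real_smul, Finset.mul_sum]
    · simp only [Prod.fst_add, Prod.snd_add, Prod.smul_fst, Prod.fst_sum, Prod.smul_snd,
        Prod.snd_sum]
      funext j
      rw [Pi.add_apply, Pi.smul_apply, Finset.sum_apply, hρni i j]
      simp [smul_eq_mul, Finset.mul_sum]
    · simp only [Prod.fst_add, Prod.snd_add, Prod.smul_fst, Prod.fst_sum, Prod.smul_snd,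
        Prod.snd_sum]
      funext j
      rw [Pi.add_apply, Pi.smul_apply, Finset.sum_apply, huni i j]
      simp [smul_eq_mul, Finset.mul_sum]
    · simp only [Prod.fst_add, Prod.snd_add, Prod.smul_fst, Prod.fst_sum, Prod.smul_snd,
        Prod.snd_sum]
      funext j
      rw [Pi.add_apply, Pi.smul_apply, Finset.sum_apply, hφni i j]
      simp [smul_eq_mul, Finset.mul_sum]
  have hy1B : ((B1, ρ1, u1, φ1) :
        (Fin N → ℂ) × (Fin N → ℝ) × (Fin N → ℝ) × (Fin N → ℝ))
      = (Bn, ρn, un, φn) + τ • ∑ i, b i • ((k1 i, k2 i, k3 i, k4 i) :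
        (Fin N → ℂ) × (Fin N → ℝ) × (Fin N → ℝ) × (Fin N → ℝ)) := by
    refine Prod.ext ?_ (Prod.ext ?_ (Prod.ext ?_ ?_))
    · simp only [Prod.fst_add, Prod.smul_fst, Prod.fst_sum, Prod.smul_snd, Prod.snd_sum]
      funext j
      rw [Pi.add_apply, Pi.smul_apply, Finset.sum_apply, hB1 j]
      simp [Complex.real_smul, Finset.mul_sum]
    · simp only [Prod.fst_add, Prod.snd_add, Prod.smul_fst, Prod.fst_sum, Prod.smul_snd,
        Prod.snd_sum]
      funext j
      rw [Pi.add_apply, Pi.smul_apply, Finset.sum_apply, hρ1 j]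
      simp [smul_eq_mul, Finset.mul_sum]
    · simp only [Prod.fst_add, Prod.snd_add, Prod.smul_fst, Prod.fst_sum, Prod.smul_snd,
        Prod.snd_sum]
      funext j
      rw [Pi.add_apply, Pi.smul_apply, Finset.sum_apply, hu1 j]
      simp [smul_eq_mul, Finset.mul_sum]
    · simp only [Prod.fst_add, Prod.snd_add, Prod.smul_fst, Prod.fst_sum, Prod.smul_snd,
        Prod.snd_sum]
      funext j
      rw [Pi.add_apply, Pi.smul_apply, Finset.sum_apply, hφ1 j]
      simp [smul_eq_mul, Finset.mul_sum]
  have horthB : ∀ i, (fun (_ : (Fin N → ℂ) × (Fin N → ℝ) × (Fin N → ℝ) × (Fin N → ℝ)) => (0:ℝ))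
        ((k1 i, k2 i, k3 i, k4 i))
      + 2 * Sbig ω κ ν β q D₂ (Bni i, ρni i, uni i, φni i) (k1 i, k2 i, k3 i, k4 i) = 0 := by
    intro i
    have hSz : Sbig ω κ ν β q D₂ (Bni i, ρni i, uni i, φni i) (k1 i, k2 i, k3 i, k4 i) = 0 := by
      set v : Fin N → ℝ := fun m => -uni i m + ν * ρni i m - κ * φni i m with hvdef
      set w : Fin N → ℝ := fun m => -β * ρni i m + ν * uni i m + κ * ν / 2 * φni i m with hwdef
      have hv : k2 i = D₁.mulVec v := hk2 i
      have hw : k3 i = D₁.mulVec w := hk3 i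
      have hvj : ∀ jj, v jj = -uni i jj + ν * ρni i jj - κ * φni i jj := fun jj => rfl
      have hwj : ∀ jj, w jj = -β * ρni i jj + ν * uni i jj + κ * ν / 2 * φni i jj :=
        fun jj => rfl
      have hK1re : ∀ jj, (k1 i jj).re
          = -(ω * ((D₂.map Complex.ofReal).mulVec (Bni i) jj).im
            - κ * (uni i jj - ν / 2 * ρni i jj + q * φni i jj) * (Bni i jj).im) := by
        intro jj
        rw [hk1 i jj, Complex.I_mul_re]
        simp [Complex.sub_im, Complex.mul_im]
        try ring
      have hK1im : ∀ jj, (k1 i jj).im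
          = ω * ((D₂.map Complex.ofReal).mulVec (Bni i) jj).re
            - κ * (uni i jj - ν / 2 * ρni i jj + q * φni i jj) * (Bni i jj).re := by
        intro jj
        rw [hk1 i jj, Complex.I_mul_im]
        simp [Complex.sub_re, Complex.mul_re]
        try ring
      have hK4 : ∀ jj, k4 i jj
          = 2 * ((Bni i jj).re * (k1 i jj).re + (Bni i jj).im * (k1 i jj).im) := by
        intro jj
        rw [hk4 i jj]
        simp [Complex.mul_re, Complex.conj_re, Complex.conj_im]
        try ring
      have hskew := skew_sum D₁ hD₁ v w
      calc Sbig ω κ ν β q D₂ (Bni i, ρni i, uni i, φni i) (k1 i, k2 i, k3 i, k4 i)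
          = ∑ j, (1 / 2 * (D₁.mulVec w j * v j + D₁.mulVec v j * w j)) := by
            unfold Sbig
            refine Finset.sum_congr rfl fun j _ => ?_
            have hinner : ∑ m, D₂ j m * ((Bni i m).re * (k1 i j).re + (Bni i m).im * (k1 i j).im)
                = ((D₂.map Complex.ofReal).mulVec (Bni i) j).re * (k1 i j).re
                  + ((D₂.map Complex.ofReal).mulVec (Bni i) j).im * (k1 i j).im := by
              rw [mulVec_re, mulVec_im, Finset.sum_mul, Finset.sum_mul,
                ← Finset.sum_add_distrib]
              exact Finset.sum_congr rfl fun m _ => by ring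
            show ω * ∑ m, D₂ j m * ((Bni i m).re * (k1 i j).re + (Bni i m).im * (k1 i j).im)
                - κ / 2 * (uni i j * k4 i j + k3 i j * φni i j)
                + κ * ν / 4 * (ρni i j * k4 i j + k2 i j * φni i j)
                - κ * q / 2 * (φni i j * k4 i j)
                - β / 2 * (ρni i j * k2 i j)
                - 1 / 2 * (uni i j * k3 i j)
                + ν / 2 * (uni i j * k2 i j + k3 i j * ρni i j)
              = 1 / 2 * (D₁.mulVec w j * v j + D₁.mulVec v j * w j)
            rw [hinner, hK4 j, hv, hw, hK1re j, hK1im j, hvj j, hwj j]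
            ring
        _ = 0 := by rw [← Finset.mul_sum, hskew, mul_zero]
    rw [hSz]; simp
  have consB := rk_conserve
    (V := (Fin N → ℂ) × (Fin N → ℝ) × (Fin N → ℝ) × (Fin N → ℝ))
    (Sbig ω κ ν β q D₂) (fun _ => 0)
    (Sbig_add ω κ ν β q D₂) (Sbig_smul ω κ ν β q D₂) (Sbig_symm ω κ ν β q D₂ hD₂)
    (by intro x y; simp) (by intro c x; simp)
    a b hsymp τ (Bn, ρn, un, φn) (B1, ρ1, u1, φ1)
    (fun i => (Bni i, ρni i, uni i, φni i)) (fun i => (k1 i, k2 i, k3 i, k4 i))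
    hYB hy1B horthB
  simp only [add_zero] at consB
  -- bridge between the Hamiltonian and the quadratic form
  have hbridge : ∀ (B : Fin N → ℂ) (ρ u φv : Fin N → ℝ),
      (∀ j, φv j = Complex.normSq (B j)) →
      discreteHamiltonian h ω κ ν β q D₂ B ρ u
        = h * Sbig ω κ ν β q D₂ (B, ρ, u, φv) (B, ρ, u, φv) := by
    intro B ρ u φv hφv
    have hφv' : φv = fun j => Complex.normSq (B j) := funext hφv
    subst hφv'
    unfold discreteHamiltonian
    rw [Sbig_split]
    beta_reduce
    have hcx : ∑ j, (((D₂.map Complex.ofReal).mulVec B) j * (starRingEnd ℂ) (B j)).re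
        = ∑ j, ∑ m, D₂ j m * ((B m).re * (B j).re + (B m).im * (B j).im) := by
      refine Finset.sum_congr rfl fun j _ => ?_
      rw [Complex.mul_re, Complex.conj_re, Complex.conj_im, mulVec_re, mulVec_im,
        Finset.sum_mul, Finset.sum_mul, ← Finset.sum_sub_distrib]
      exact Finset.sum_congr rfl fun m _ => by ring
    have hR : ∑ j, (-(κ / 2) * (u j * Complex.normSq (B j) + u j * Complex.normSq (B j))
          + κ * ν / 4 * (ρ j * Complex.normSq (B j) + ρ j * Complex.normSq (B j))
          - κ * q / 2 * (Complex.normSq (B j) * Complex.normSq (B j))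
          - β / 2 * (ρ j * ρ j) - 1 / 2 * (u j * u j)
          + ν / 2 * (u j * ρ j + u j * ρ j))
        = (-κ) * ∑ j, (u j - ν / 2 * ρ j + q / 2 * Complex.normSq (B j)) * Complex.normSq (B j)
          + (-(β / 2)) * ∑ j, ρ j * ρ j + (-(1 / 2)) * ∑ j, u j * u j
          + ν * ∑ j, u j * ρ j := by
      simp only [Finset.mul_sum]
      rw [← Finset.sum_add_distrib, ← Finset.sum_add_distrib, ← Finset.sum_add_distrib]
      exact Finset.sum_congr rfl fun j _ => by ring
    rw [hcx, hR]
    ring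
  rw [hbridge B1 ρ1 u1 φ1 hphi1, hbridge Bn ρn un φn hconsistent, consB]
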